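/- The set of real numbers x that admit at least two distinct quasi-nega-s representations (i.e. for which there exist digit sequences α ≠ α' with S(α) = S(α') = x) is countable. -/

import Mathlib

open scoped Classical BigOperators

/-- Sign of the `n`-th term: `-1` if `n ∈ N_B`, `+1` otherwise. -/
noncomputable def eps (B : Set ℕ+) (n : ℕ+) : ℝ := if n ∈ B then -1 else 1

/-- The quasi-nega-s value of a digit sequence `α`:
`S(α) = Σ_{n≥1} ε_n α_n / s^n`. -/
noncomputable def qnsVal (s : ℕ) (B : Set ℕ+) (α : ℕ+ → ℕ) : ℝ :=
  ∑' n : ℕ+, eps B n * (α n : ℝ) / (s : ℝ) ^ (n : ℕ)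

/-!
If `S(α) = S(α')` with `α ≠ α'`, let `n₀` be the first index where the signed digits
`ε_n α_n` and `ε_n α'_n` differ. Their difference `c_n` is an integer with `|c_n| ≤ s - 1`, so
`|c_{n₀}| / s^{n₀} ≥ s^{-n₀}`, which is also the largest value `Σ_{n > n₀} (s - 1) / s^n` the
tail can take. Hence the tail must be extremal: `c_n = ±(s - 1)` with one sign for all `n > n₀`,
which forces `α` to agree from `n₀` on with the digit sequence maximising or minimising `S`.
So every such `x` is the value of a sequence that differs in finitely many places from one of
two fixed sequences, and there are only countably many of those.
-/

open Filter

theorem Set.countable_setOf_eventuallyEq_cofinite {ι α : Type*} [Countable ι] [Countable α]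
    (g : ι → α) : {f : ι → α | f =ᶠ[cofinite] g}.Countable := by
  have hsub : {f : ι → α | f =ᶠ[cofinite] g} ⊆
      ⋃ S : Finset ι, Set.range fun h : S → α => fun i => if hi : i ∈ S then h ⟨i, hi⟩ else g i := by
    intro f hf
    obtain hfin : {i | f i ≠ g i}.Finite := eventually_cofinite.1 hf
    refine Set.mem_iUnion.2 ⟨hfin.toFinset, fun i => f i, funext fun i => ?_⟩
    by_cases hi : i ∈ hfin.toFinset
    · simp [hi]
    · simp only [hi, dite_false]
      exact (not_not.1 (hfin.mem_toFinset.not.1 hi)).symm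
  exact (Set.countable_iUnion fun S => Set.countable_range _).mono hsub

theorem PNat.eventually_cofinite_of_eventually_atTop_succPNat {p : ℕ+ → Prop}
    (h : ∀ᶠ n : ℕ in atTop, p n.succPNat) : ∀ᶠ k in cofinite, p k := by
  rw [← Nat.cofinite_eq_atTop] at h
  filter_upwards [PNat.natPred_injective.tendsto_cofinite.eventually h] with k hk
  rwa [PNat.succPNat_natPred] at hk

section Expansion

variable {r : ℝ}

theorem summable_div_pow_succ_of_abs_le (hr : 1 < r) {c : ℕ → ℝ} {C : ℝ}
    (hc : ∀ n, |c n| ≤ C) : Summable fun n => c n / r ^ (n + 1) := by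
  have hr₀ : 0 < r := one_pos.trans hr
  have hgeom : Summable fun n : ℕ => C / r * r⁻¹ ^ n :=
    (summable_geometric_of_lt_one (by positivity) (inv_lt_one_of_one_lt₀ hr)).mul_left _
  refine hgeom.of_norm_bounded fun n => ?_
  rw [Real.norm_eq_abs, abs_div, abs_of_pos (pow_pos hr₀ _), inv_pow, pow_succ]
  calc |c n| / (r ^ n * r) ≤ C / (r ^ n * r) := by gcongr; exact hc n
    _ = C / r * (r ^ n)⁻¹ := by field_simp

theorem tsum_sub_one_div_pow_add_succ (hr : 1 < r) (k : ℕ) :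
    ∑' i : ℕ, (r - 1) / r ^ (i + k + 1) = 1 / r ^ k := by
  have hr₀ : 0 < r := one_pos.trans hr
  have hterm : ∀ i : ℕ, (r - 1) / r ^ (i + k + 1) = (r - 1) / r ^ (k + 1) * r⁻¹ ^ i := by
    intro i
    rw [inv_pow, ← div_eq_mul_inv, div_div, ← pow_add]
    ring_nf
  simp_rw [hterm]
  rw [tsum_mul_left, tsum_geometric_of_lt_one (by positivity) (inv_lt_one_of_one_lt₀ hr)]
  have : r - 1 ≠ 0 := sub_ne_zero.2 hr.ne'
  field_simp
  ring

/-- `1 / r ^ k` is the value of the tail whose digits are all `r - 1`. -/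
theorem eq_sub_one_of_one_div_pow_le_tsum (hr : 1 < r) {c : ℕ → ℝ} (hc : ∀ n, |c n| ≤ r - 1)
    (k : ℕ) (h : 1 / r ^ k ≤ ∑' i, c (i + k) / r ^ (i + k + 1)) (i : ℕ) : c (i + k) = r - 1 := by
  by_contra hne
  have hpow (j : ℕ) : 0 < r ^ (j + k + 1) := pow_pos (one_pos.trans hr) _
  have hlt : c (i + k) / r ^ (i + k + 1) < (r - 1) / r ^ (i + k + 1) :=
    div_lt_div_of_pos_right (lt_of_le_of_ne (abs_le.1 (hc _)).2 hne) (hpow i)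
  have hsummable {d : ℕ → ℝ} (hd : ∀ n, |d n| ≤ r - 1) :
      Summable fun i => d (i + k) / r ^ (i + k + 1) :=
    (summable_nat_add_iff (f := fun n => d n / r ^ (n + 1)) k).2
      (summable_div_pow_succ_of_abs_le hr hd)
  have hsum := Summable.tsum_lt_tsum (f := fun i => c (i + k) / r ^ (i + k + 1))
    (g := fun i => (r - 1) / r ^ (i + k + 1))
    (fun j => div_le_div_of_nonneg_right (abs_le.1 (hc _)).2 (hpow j).le) hlt
    (hsummable hc) (hsummable (d := fun _ => r - 1) fun _ => (abs_of_pos (sub_pos.2 hr)).le)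
  rw [tsum_sub_one_div_pow_add_succ hr] at hsum
  linarith

theorem eventually_eq_sub_one_or_eq_neg_of_tsum_eq_zero (hr : 1 < r) {c : ℕ → ℤ}
    (hc : ∀ n, |(c n : ℝ)| ≤ r - 1) (hc₀ : c ≠ 0) (hsum : ∑' n, (c n : ℝ) / r ^ (n + 1) = 0) :
    (∀ᶠ n in atTop, (c n : ℝ) = r - 1) ∨ (∀ᶠ n in atTop, (c n : ℝ) = -(r - 1)) := by
  have hex : ∃ n, c n ≠ 0 := Function.ne_iff.1 hc₀
  set n₀ := Nat.find hex
  have hn₀ : c n₀ ≠ 0 := Nat.find_spec hex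
  have hhead : ∑ i ∈ Finset.range (n₀ + 1), (c i : ℝ) / r ^ (i + 1) = c n₀ / r ^ (n₀ + 1) := by
    rw [Finset.sum_range_succ, Finset.sum_eq_zero, zero_add]
    intro i hi
    simp [not_not.1 (Nat.find_min hex (Finset.mem_range.1 hi))]
  have htail : ∑' i, (c (i + (n₀ + 1)) : ℝ) / r ^ (i + (n₀ + 1) + 1) = -(c n₀ / r ^ (n₀ + 1)) := by
    have := (summable_div_pow_succ_of_abs_le hr hc).sum_add_tsum_nat_add (n₀ + 1)
    rw [hhead, hsum] at this
    linarith
  have eventually_of_forall_add {p : ℕ → Prop} (hp : ∀ i, p (i + (n₀ + 1))) :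
      ∀ᶠ n in atTop, p n := by
    filter_upwards [eventually_ge_atTop (n₀ + 1)] with n hn
    obtain ⟨i, rfl⟩ := Nat.exists_eq_add_of_le' hn
    exact hp i
  rcases lt_or_gt_of_ne hn₀ with hneg | hpos
  · left
    refine eventually_of_forall_add (eq_sub_one_of_one_div_pow_le_tsum hr hc _ ?_)
    rw [htail, ← neg_div]
    gcongr
    have : (c n₀ : ℝ) ≤ -1 := by exact_mod_cast (show c n₀ ≤ -1 by omega)
    linarith
  · right
    refine eventually_of_forall_add fun i => neg_eq_iff_eq_neg.1 <|
      eq_sub_one_of_one_div_pow_le_tsum hr (c := fun n => -(c n : ℝ)) (by simpa using hc) _ ?_ i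
    simp_rw [neg_div, tsum_neg, htail, neg_neg]
    gcongr
    exact_mod_cast (show 1 ≤ c n₀ by omega)

end Expansion

section Digits

/-- The signed digit `ε_k α_k`. -/
noncomputable def signedDigit (B : Set ℕ+) (α : ℕ+ → ℕ) (k : ℕ+) : ℤ := if k ∈ B then -α k else α k

/-- The digit sequence with the largest quasi-nega-s value. -/
noncomputable def qnsMaxDigits (s : ℕ) (B : Set ℕ+) (k : ℕ+) : ℕ := if k ∈ B then 0 else s - 1

/-- The digit sequence with the smallest quasi-nega-s value. -/
noncomputable def qnsMinDigits (s : ℕ) (B : Set ℕ+) (k : ℕ+) : ℕ := if k ∈ B then s - 1 else 0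

variable {s : ℕ} {B : Set ℕ+} {α α' : ℕ+ → ℕ} {k : ℕ+}

theorem abs_signedDigit_lt (hα : α k < s) : |signedDigit B α k| < s := by
  unfold signedDigit; split_ifs <;> rw [abs_lt] <;> omega

theorem abs_signedDigit_sub_le (hα : α k < s) (hα' : α' k < s) :
    |signedDigit B α k - signedDigit B α' k| ≤ s - 1 := by
  unfold signedDigit; split_ifs <;> rw [abs_le] <;> omega

theorem signedDigit_sub_ne_zero (h : α k ≠ α' k) : signedDigit B α k - signedDigit B α' k ≠ 0 := by
  unfold signedDigit; split_ifs <;> omega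

theorem eq_qnsMaxDigits_of_signedDigit_sub_eq (hα : α k < s) (hα' : α' k < s)
    (h : signedDigit B α k - signedDigit B α' k = s - 1) : α k = qnsMaxDigits s B k := by
  unfold signedDigit qnsMaxDigits at *; split_ifs at * <;> omega

theorem eq_qnsMinDigits_of_signedDigit_sub_eq (hα : α k < s) (hα' : α' k < s)
    (h : signedDigit B α k - signedDigit B α' k = -(s - 1)) : α k = qnsMinDigits s B k := by
  unfold signedDigit qnsMinDigits at *; split_ifs at * <;> omega

theorem qnsVal_eq_tsum_signedDigit (s : ℕ) (B : Set ℕ+) (α : ℕ+ → ℕ) :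
    qnsVal s B α = ∑' n : ℕ, (signedDigit B α n.succPNat : ℝ) / (s : ℝ) ^ (n + 1) := by
  rw [qnsVal, ← Equiv.pnatEquivNat.symm.tsum_eq]
  congr 1 with n
  simp only [Equiv.pnatEquivNat_symm_apply, Nat.succPNat_coe, Nat.succ_eq_add_one, eps, signedDigit]
  split_ifs <;> push_cast <;> ring

theorem qnsVal_sub_qnsVal (hs : 2 ≤ s) (hα : ∀ n, α n < s) (hα' : ∀ n, α' n < s) :
    qnsVal s B α - qnsVal s B α' = ∑' n : ℕ,
      ((signedDigit B α n.succPNat - signedDigit B α' n.succPNat : ℤ) : ℝ) / (s : ℝ) ^ (n + 1) := by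
  have hs₁ : (1 : ℝ) < s := by exact_mod_cast hs
  have hsum {β : ℕ+ → ℕ} (hβ : ∀ n, β n < s) :
      Summable fun n : ℕ => (signedDigit B β n.succPNat : ℝ) / (s : ℝ) ^ (n + 1) :=
    summable_div_pow_succ_of_abs_le hs₁ (C := s) fun n => by
      exact_mod_cast (abs_signedDigit_lt (hβ _)).le
  rw [qnsVal_eq_tsum_signedDigit, qnsVal_eq_tsum_signedDigit, ← (hsum hα).tsum_sub (hsum hα')]
  push_cast
  simp_rw [sub_div]

theorem eventuallyEq_qnsMaxDigits_or_qnsMinDigits_of_qnsVal_eq (hs : 2 ≤ s)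
    (hα : ∀ n, α n < s) (hα' : ∀ n, α' n < s) (hne : α ≠ α')
    (heq : qnsVal s B α = qnsVal s B α') :
    α =ᶠ[cofinite] qnsMaxDigits s B ∨ α =ᶠ[cofinite] qnsMinDigits s B := by
  set c : ℕ → ℤ := fun n => signedDigit B α n.succPNat - signedDigit B α' n.succPNat
  have hs₁ : (1 : ℝ) < s := by exact_mod_cast hs
  have hc (n : ℕ) : |(c n : ℝ)| ≤ s - 1 := by
    have := abs_signedDigit_sub_le (B := B) (hα n.succPNat) (hα' n.succPNat)
    exact_mod_cast this
  have hc₀ : c ≠ 0 := by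
    obtain ⟨k, hk⟩ := Function.ne_iff.1 hne
    refine Function.ne_iff.2 ⟨k.natPred, ?_⟩
    simpa [c, PNat.succPNat_natPred] using signedDigit_sub_ne_zero (B := B) hk
  have hsum : ∑' n, (c n : ℝ) / (s : ℝ) ^ (n + 1) = 0 := by
    rw [← qnsVal_sub_qnsVal hs hα hα', heq, sub_self]
  refine (eventually_eq_sub_one_or_eq_neg_of_tsum_eq_zero hs₁ hc hc₀ hsum).imp
    (fun h => PNat.eventually_cofinite_of_eventually_atTop_succPNat ?_)
    (fun h => PNat.eventually_cofinite_of_eventually_atTop_succPNat ?_)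
  · filter_upwards [h] with n hn
    exact eq_qnsMaxDigits_of_signedDigit_sub_eq (hα _) (hα' _) (by exact_mod_cast hn)
  · filter_upwards [h] with n hn
    exact eq_qnsMinDigits_of_signedDigit_sub_eq (hα _) (hα' _) (by exact_mod_cast hn)

end Digits

theorem quasiNegaS_two_representations_countable (s : ℕ) (hs : 2 ≤ s) (B : Set ℕ+) :
    {x : ℝ | ∃ α α' : ℕ+ → ℕ, (∀ n, α n < s) ∧ (∀ n, α' n < s) ∧ α ≠ α' ∧
      qnsVal s B α = x ∧ qnsVal s B α' = x}.Countable := by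
  refine (((Set.countable_setOf_eventuallyEq_cofinite (qnsMaxDigits s B)).union
    (Set.countable_setOf_eventuallyEq_cofinite (qnsMinDigits s B))).image (qnsVal s B)).mono ?_
  rintro x ⟨α, α', hα, hα', hne, rfl, hx'⟩
  exact ⟨α, eventuallyEq_qnsMaxDigits_or_qnsMinDigits_of_qnsVal_eq hs hα hα' hne hx'.symm, rfl⟩
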